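/- Composition theorem for FEI⁺: let F : {-1,1}^k → ℝ and g₁,...,g_k : {-1,1}^{kℓ} → {-1,1} on disjoint blocks, f = F(g₁,...,g_k), μ a product distribution, η = ⟨E_μ[g₁],...,E_μ[g_k]⟩. If (1) H^μ[g_i^{≥1}] ≤ C·(Inf^μ[g_i] − Var_μ[g_i]) for all i, and (2) H^η[F^{≥1}] ≤ C·(Inf^η[F] − Var_η[F]), then H^μ[f^{≥1}] ≤ C·(Inf^μ[f] − Var_μ[f]). -/

import Mathlib

open Finset Real

noncomputable section

/-- ±1 encoding of a Boolean. -/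
def b2r (b : Bool) : ℝ := if b then 1 else -1

variable {ι : Type*} [Fintype ι] [DecidableEq ι]

/-- Uniform-distribution Fourier coefficient `f̂(S) = E[f(x) ∏_{i∈S} x_i]`. -/
def coeff (f : (ι → Bool) → ℝ) (S : Finset ι) : ℝ :=
  (∑ x : ι → Bool, f x * ∏ i ∈ S, b2r (x i)) / (Fintype.card (ι → Bool) : ℝ)

/-- Total influence `Inf[f] = ∑_S |S| f̂(S)²`. -/
def totalInf (f : (ι → Bool) → ℝ) : ℝ :=
  ∑ S : Finset ι, (S.card : ℝ) * (coeff f S) ^ 2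

/-- Spectral entropy `H[f] = ∑_S f̂(S)² log₂(1/f̂(S)²)`. -/
def specEnt (f : (ι → Bool) → ℝ) : ℝ :=
  ∑ S : Finset ι, (coeff f S) ^ 2 * Real.logb 2 (1 / (coeff f S) ^ 2)

/-- Variance `Var[f] = ∑_{S ≠ ∅} f̂(S)²`. -/
def fvariance (f : (ι → Bool) → ℝ) : ℝ :=
  ∑ S ∈ (univ : Finset (Finset ι)).erase ∅, (coeff f S) ^ 2

/-- Weight of the point `x` under the product distribution with biases `μ` (`E[x i] = μ i`). -/
def bweight (μ : ι → ℝ) (x : ι → Bool) : ℝ :=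
  ∏ i, (if x i then (1 + μ i) / 2 else (1 - μ i) / 2)

/-- Expectation under the μ-biased product distribution. -/
def bexp (μ : ι → ℝ) (f : (ι → Bool) → ℝ) : ℝ :=
  ∑ x : ι → Bool, bweight μ x * f x

/-- μ-biased Fourier character `φ^μ_S(x) = ∏_{i∈S} (x_i − μ_i)/σ_i`. -/
def bchi (μ : ι → ℝ) (S : Finset ι) (x : ι → Bool) : ℝ :=
  ∏ i ∈ S, (b2r (x i) - μ i) / Real.sqrt (1 - μ i ^ 2)

/-- μ-biased Fourier coefficient `f̃(S) = E_μ[f φ^μ_S]`. -/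
def bcoeff (μ : ι → ℝ) (f : (ι → Bool) → ℝ) (S : Finset ι) : ℝ :=
  bexp μ fun x => f x * bchi μ S x

/-- μ-biased total influence `Inf^μ[f] = ∑_S |S| f̃(S)²`. -/
def bInf (μ : ι → ℝ) (f : (ι → Bool) → ℝ) : ℝ :=
  ∑ S : Finset ι, (S.card : ℝ) * (bcoeff μ f S) ^ 2

/-- μ-biased variance via Fourier coefficients `Var_μ[f] = ∑_{S ≠ ∅} f̃(S)²`. -/
def bVar (μ : ι → ℝ) (f : (ι → Bool) → ℝ) : ℝ :=
  ∑ S ∈ (univ : Finset (Finset ι)).erase ∅, (bcoeff μ f S) ^ 2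

/-- Degree-≥1 μ-biased spectral entropy
`H^μ[f^{≥1}] = ∑_{S≠∅} f̃(S)² log₂(∏_{i∈S} σ_i² / f̃(S)²)`. -/
def bEnt1 (μ : ι → ℝ) (f : (ι → Bool) → ℝ) : ℝ :=
  ∑ S ∈ (univ : Finset (Finset ι)).erase ∅,
    (bcoeff μ f S) ^ 2 * Real.logb 2 ((∏ i ∈ S, (1 - μ i ^ 2)) / (bcoeff μ f S) ^ 2)

/-- Full μ-biased spectral entropy (sum over all `S`). -/
def bEnt (μ : ι → ℝ) (f : (ι → Bool) → ℝ) : ℝ :=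
  ∑ S : Finset ι,
    (bcoeff μ f S) ^ 2 * Real.logb 2 ((∏ i ∈ S, (1 - μ i ^ 2)) / (bcoeff μ f S) ^ 2)

/-- Probabilistic variance under the μ-biased product distribution. -/
def bVarFn (μ : ι → ℝ) (f : (ι → Bool) → ℝ) : ℝ :=
  bexp μ (fun x => (f x - bexp μ f) ^ 2)

/-- All biases lie strictly between −1 and 1. -/
def validBias (μ : ι → ℝ) : Prop := ∀ i, -1 < μ i ∧ μ i < 1

/-- Discrete derivative `D_{x_j} f`. -/
def Dx (j : ι) (f : (ι → Bool) → ℝ) (x : ι → Bool) : ℝ :=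
  (f (Function.update x j true) - f (Function.update x j false)) / 2

/-- μ-biased discrete derivative `D_{φ^μ_j} f = σ_j D_{x_j} f`. -/
def Dphi (μ : ι → ℝ) (j : ι) (f : (ι → Bool) → ℝ) (x : ι → Bool) : ℝ :=
  Real.sqrt (1 - μ j ^ 2) * Dx j f x

variable {μ : ι → ℝ}

lemma b2r_sq (b : Bool) : b2r b ^ 2 = 1 := by cases b <;> simp [b2r]

lemma sig_pos (hμ : validBias μ) (i : ι) : 0 < 1 - μ i ^ 2 := by
  have h := hμ i; nlinarith [h.1, h.2]

lemma bweight_pos (hμ : validBias μ) (x : ι → Bool) : 0 < bweight μ x := by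
  unfold bweight; apply Finset.prod_pos; intro i _
  have := hμ i; cases hx : x i <;> simp [hx] <;> linarith [this.1, this.2]

lemma sum_bweight (μ : ι → ℝ) : ∑ x : ι → Bool, bweight μ x = 1 := by
  unfold bweight
  rw [← Fintype.prod_sum (fun i (b : Bool) => if b then (1 + μ i) / 2 else (1 - μ i) / 2)]
  apply Finset.prod_eq_one; intro i _
  rw [Fintype.sum_bool]; simp; ring

lemma bexp_const (μ : ι → ℝ) (c : ℝ) : bexp μ (fun _ => c) = c := by
  unfold bexp
  rw [← Finset.sum_mul, sum_bweight, one_mul]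

lemma chi_delta (hμ : validBias μ) (x y : ι → Bool) :
    ∑ S : Finset ι, bchi μ S x * bchi μ S y
      = if x = y then (bweight μ x)⁻¹ else 0 := by
  set a : ι → ℝ := fun i => (b2r (x i) - μ i) * (b2r (y i) - μ i) / (1 - μ i ^ 2) with ha
  have key : ∀ S : Finset ι, bchi μ S x * bchi μ S y = (∏ i ∈ S, a i) * ∏ i ∈ Sᶜ, 1 := by
    intro S
    rw [Finset.prod_const_one, mul_one]
    unfold bchi; rw [← Finset.prod_mul_distrib]
    refine Finset.prod_congr rfl fun i _ => ?_
    rw [div_mul_div_comm, Real.mul_self_sqrt (le_of_lt (sig_pos hμ i))]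
  have step : ∑ S : Finset ι, bchi μ S x * bchi μ S y = ∏ i, (a i + 1) := by
    rw [Fintype.prod_add a (fun _ => (1:ℝ))]
    exact Finset.sum_congr rfl fun S _ => key S
  rw [step]
  have coord : ∀ i, a i + 1 = if x i = y i then (if x i then (1 + μ i) / 2 else (1 - μ i) / 2)⁻¹ else 0 := by
    intro i
    have h := sig_pos hμ i
    have h1 : (1:ℝ) + μ i ≠ 0 := by nlinarith
    have h2 : (1:ℝ) - μ i ≠ 0 := by nlinarith
    cases hx : x i <;> cases hy : y i <;>
      simp only [ha, b2r, hx, hy, if_true, if_false, Bool.true_eq_false, Bool.false_eq_true,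
        if_pos rfl, eq_self_iff_true] <;> rw [div_add' _ _ _ (ne_of_gt h)] <;>
      field_simp <;> ring_nf
  by_cases hxy : x = y
  · subst hxy
    rw [if_pos rfl]
    have : ∀ i, a i + 1 = (if x i then (1 + μ i) / 2 else (1 - μ i) / 2)⁻¹ := by
      intro i; rw [coord i, if_pos rfl]
    rw [Finset.prod_congr rfl (fun i _ => this i), Finset.prod_inv_distrib]
    rfl
  · rw [if_neg hxy]
    have : ∃ i, x i ≠ y i := by
      by_contra hc; push_neg at hc; exact hxy (funext hc)
    obtain ⟨i, hi⟩ := this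
    exact Finset.prod_eq_zero (Finset.mem_univ i) (by rw [coord i, if_neg hi])

lemma inversion (hμ : validBias μ) (f : (ι → Bool) → ℝ) (x : ι → Bool) :
    ∑ S : Finset ι, bcoeff μ f S * bchi μ S x = f x := by
  unfold bcoeff bexp
  have h1 : ∀ S : Finset ι,
      (∑ y : ι → Bool, bweight μ y * (f y * bchi μ S y)) * bchi μ S x
        = ∑ y : ι → Bool, bweight μ y * f y * (bchi μ S y * bchi μ S x) := by
    intro S; rw [Finset.sum_mul]
    exact Finset.sum_congr rfl fun y _ => by ring
  rw [Finset.sum_congr rfl fun S _ => h1 S, Finset.sum_comm]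
  have h2 : ∀ y : ι → Bool,
      ∑ S : Finset ι, bweight μ y * f y * (bchi μ S y * bchi μ S x)
        = bweight μ y * f y * (if y = x then (bweight μ y)⁻¹ else 0) := by
    intro y; rw [← Finset.mul_sum, chi_delta hμ]
  rw [Finset.sum_congr rfl fun y _ => h2 y]
  simp only [mul_ite, mul_zero]
  rw [Finset.sum_ite_eq' Finset.univ x (fun y => bweight μ y * f y * (bweight μ y)⁻¹)]
  rw [if_pos (Finset.mem_univ x)]
  field_simp [ne_of_gt (bweight_pos hμ x)]

lemma parseval (hμ : validBias μ) (f : (ι → Bool) → ℝ) :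
    ∑ S : Finset ι, (bcoeff μ f S) ^ 2 = bexp μ (fun x => f x ^ 2) := by
  have h1 : ∀ S : Finset ι, (bcoeff μ f S) ^ 2
      = ∑ y : ι → Bool, ∑ z : ι → Bool,
          bweight μ y * f y * (bweight μ z * f z) * (bchi μ S y * bchi μ S z) := by
    intro S
    rw [sq]
    unfold bcoeff bexp
    rw [Finset.sum_mul_sum]
    exact Finset.sum_congr rfl fun y _ => Finset.sum_congr rfl fun z _ => by ring
  rw [Finset.sum_congr rfl fun S _ => h1 S, Finset.sum_comm]
  unfold bexp
  refine Finset.sum_congr rfl fun y _ => ?_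
  rw [Finset.sum_comm]
  have h2 : ∀ z : ι → Bool,
      ∑ S : Finset ι, bweight μ y * f y * (bweight μ z * f z) * (bchi μ S y * bchi μ S z)
        = bweight μ y * f y * (bweight μ z * f z) * (if y = z then (bweight μ y)⁻¹ else 0) := by
    intro z; rw [← Finset.mul_sum, chi_delta hμ]
  rw [Finset.sum_congr rfl fun z _ => h2 z]
  simp only [mul_ite, mul_zero]
  rw [Finset.sum_ite_eq Finset.univ y
    (fun z => bweight μ y * f y * (bweight μ z * f z) * (bweight μ y)⁻¹)]
  rw [if_pos (Finset.mem_univ y)]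
  field_simp [ne_of_gt (bweight_pos hμ y)]

lemma bchi_empty (μ : ι → ℝ) (x : ι → Bool) : bchi μ ∅ x = 1 := by
  unfold bchi; simp

lemma bcoeff_empty (μ : ι → ℝ) (f : (ι → Bool) → ℝ) : bcoeff μ f ∅ = bexp μ f := by
  unfold bcoeff
  refine congrArg _ (funext fun x => ?_)
  rw [bchi_empty, mul_one]

lemma bexp_bchi (hμ : validBias μ) (S : Finset ι) :
    bexp μ (bchi μ S) = if S = ∅ then 1 else 0 := by
  have hone : ∀ S : Finset ι, bcoeff μ (fun _ => (1:ℝ)) S = bexp μ (bchi μ S) := by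
    intro S; unfold bcoeff; simp
  have hp := parseval hμ (fun _ => (1:ℝ))
  simp only [one_pow] at hp
  rw [bexp_const] at hp
  have hempty : bcoeff μ (fun _ => (1:ℝ)) ∅ = 1 := by
    rw [bcoeff_empty, bexp_const]
  by_cases hS : S = ∅
  · rw [if_pos hS, ← hone, hS, hempty]
  · rw [if_neg hS, ← hone]
    have hsplit := Finset.add_sum_erase Finset.univ (fun S => (bcoeff μ (fun _ => (1:ℝ)) S) ^ 2)
      (Finset.mem_univ ∅)
    rw [← hsplit] at hp
    simp only [hempty, one_pow] at hp
    have hz : ∑ T ∈ Finset.univ.erase ∅, (bcoeff μ (fun _ => (1:ℝ)) T) ^ 2 = 0 := by linarith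
    have := (Finset.sum_eq_zero_iff_of_nonneg (fun T _ => sq_nonneg _)).mp hz S
      (Finset.mem_erase.mpr ⟨hS, Finset.mem_univ S⟩)
    exact pow_eq_zero_iff (by norm_num) |>.mp this

lemma bexp_sum {κ : Type*} (μ : ι → ℝ) (s : Finset κ) (A : κ → (ι → Bool) → ℝ) :
    bexp μ (fun x => ∑ t ∈ s, A t x) = ∑ t ∈ s, bexp μ (A t) := by
  unfold bexp
  rw [Finset.sum_congr rfl fun (x : ι → Bool) (_ : x ∈ Finset.univ) => Finset.mul_sum _ _ _,
    Finset.sum_comm]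

lemma bexp_smul (μ : ι → ℝ) (c : ℝ) (h : (ι → Bool) → ℝ) :
    bexp μ (fun x => c * h x) = c * bexp μ h := by
  unfold bexp; rw [Finset.mul_sum]
  exact Finset.sum_congr rfl fun x _ => by ring

lemma bexp_congr {μ : ι → ℝ} {h h' : (ι → Bool) → ℝ} (he : ∀ x, h x = h' x) :
    bexp μ h = bexp μ h' := by
  unfold bexp; exact Finset.sum_congr rfl fun x _ => by rw [he x]

lemma bool_mean_lt_one (hμ : validBias μ) (g : (ι → Bool) → Bool) (x0 : ι → Bool)
    (h0 : g x0 = false) : bexp μ (fun x => b2r (g x)) < 1 := by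
  have key : 0 < ∑ x : ι → Bool, bweight μ x * (1 - b2r (g x)) := by
    apply Finset.sum_pos'
    · intro x _
      have : (0:ℝ) ≤ 1 - b2r (g x) := by cases hg : g x <;> simp [b2r, hg] <;> norm_num
      exact mul_nonneg (le_of_lt (bweight_pos hμ x)) this
    · exact ⟨x0, Finset.mem_univ x0, by
        simp only [h0, b2r]; norm_num; exact bweight_pos hμ x0⟩
  have expand : ∑ x : ι → Bool, bweight μ x * (1 - b2r (g x))
      = (∑ x : ι → Bool, bweight μ x) - bexp μ (fun x => b2r (g x)) := by
    unfold bexp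
    rw [← Finset.sum_sub_distrib]
    exact Finset.sum_congr rfl fun x _ => by ring
  rw [sum_bweight μ] at expand
  rw [expand] at key; linarith

lemma bool_mean_gt (hμ : validBias μ) (g : (ι → Bool) → Bool) (x1 : ι → Bool)
    (h1 : g x1 = true) : -1 < bexp μ (fun x => b2r (g x)) := by
  have key : 0 < ∑ x : ι → Bool, bweight μ x * (1 + b2r (g x)) := by
    apply Finset.sum_pos'
    · intro x _
      have : (0:ℝ) ≤ 1 + b2r (g x) := by cases hg : g x <;> simp [b2r, hg] <;> norm_num
      exact mul_nonneg (le_of_lt (bweight_pos hμ x)) this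
    · exact ⟨x1, Finset.mem_univ x1, by
        simp only [h1, b2r]; norm_num; exact bweight_pos hμ x1⟩
  have expand : ∑ x : ι → Bool, bweight μ x * (1 + b2r (g x))
      = (∑ x : ι → Bool, bweight μ x) + bexp μ (fun x => b2r (g x)) := by
    unfold bexp
    rw [← Finset.sum_add_distrib]
    exact Finset.sum_congr rfl fun x _ => by ring
  rw [sum_bweight μ] at expand
  rw [expand] at key; linarith

lemma prod_univ_ite (T : Finset ι) (f : ι → ℝ) :
    ∏ i, (if i ∈ T then f i else 1) = ∏ i ∈ T, f i := by
  rw [← Finset.prod_filter]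
  congr 1
  exact Finset.filter_mem_eq_inter.trans (by simp)

section ProductSpace
variable {k l : ℕ}

/-- Restriction of the bias vector to block `i`. -/
def muB (μ : Fin k × Fin l → ℝ) (i : Fin k) : Fin l → ℝ := fun j => μ (i, j)

/-- Block components of a subset of the product index set. -/
def packF (S : Finset (Fin k × Fin l)) (i : Fin k) : Finset (Fin l) :=
  (S.filter (fun p => p.1 = i)).image Prod.snd

/-- Assemble a subset of the product index set from block components. -/
def unpackF (s : Fin k → Finset (Fin l)) : Finset (Fin k × Fin l) :=
  Finset.univ.filter (fun p => p.2 ∈ s p.1)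

lemma mem_packF {S : Finset (Fin k × Fin l)} {i : Fin k} {j : Fin l} :
    j ∈ packF S i ↔ (i, j) ∈ S := by
  simp only [packF, Finset.mem_image, Finset.mem_filter]
  constructor
  · rintro ⟨p, ⟨hp, rfl⟩, rfl⟩; exact hp
  · intro h; exact ⟨(i, j), ⟨h, rfl⟩, rfl⟩

lemma mem_unpackF {s : Fin k → Finset (Fin l)} {p : Fin k × Fin l} :
    p ∈ unpackF s ↔ p.2 ∈ s p.1 := by
  simp [unpackF]

lemma packF_unpackF (s : Fin k → Finset (Fin l)) : packF (unpackF s) = s := by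
  funext i; ext j; rw [mem_packF, mem_unpackF]

lemma unpackF_packF (S : Finset (Fin k × Fin l)) : unpackF (packF S) = S := by
  ext p; rw [mem_unpackF, mem_packF]

/-- The pack/unpack equivalence. -/
def packE : Finset (Fin k × Fin l) ≃ (Fin k → Finset (Fin l)) where
  toFun := packF
  invFun := unpackF
  left_inv := unpackF_packF
  right_inv := packF_unpackF

lemma sum_unpackF (f : Finset (Fin k × Fin l) → ℝ) :
    ∑ S : Finset (Fin k × Fin l), f S = ∑ s : Fin k → Finset (Fin l), f (unpackF s) := by
  exact (Equiv.sum_comp (packE.symm) f).symm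

lemma prod_packF_split (S : Finset (Fin k × Fin l)) (F : Fin k × Fin l → ℝ) :
    ∏ p ∈ S, F p = ∏ i, ∏ j ∈ packF S i, F (i, j) := by
  rw [← Finset.prod_fiberwise S (fun p => p.1) F]
  refine Finset.prod_congr rfl fun i _ => ?_
  unfold packF
  rw [Finset.prod_image]
  · refine Finset.prod_congr rfl fun p hp => ?_
    obtain ⟨-, h1⟩ := Finset.mem_filter.mp hp
    rw [← h1]
  · intro p hp q hq hpq
    obtain ⟨-, h1⟩ := Finset.mem_filter.mp hp
    obtain ⟨-, h2⟩ := Finset.mem_filter.mp hq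
    exact Prod.ext (h1.trans h2.symm) hpq

lemma card_packF (S : Finset (Fin k × Fin l)) :
    (S.card : ℝ) = ∑ i, ((packF S i).card : ℝ) := by
  have h := Finset.card_eq_sum_card_fiberwise
    (f := fun p : Fin k × Fin l => p.1) (s := S) (t := Finset.univ) (fun x _ => Finset.mem_univ _)
  rw [h]
  push_cast
  refine Finset.sum_congr rfl fun i _ => ?_
  congr 1
  unfold packF
  rw [Finset.card_image_of_injOn]
  intro p hp q hq hpq
  obtain ⟨-, h1⟩ := Finset.mem_filter.mp hp
  obtain ⟨-, h2⟩ := Finset.mem_filter.mp hq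
  exact Prod.ext (h1.trans h2.symm) hpq

lemma bchi_split (μ : Fin k × Fin l → ℝ) (S : Finset (Fin k × Fin l)) (x : Fin k × Fin l → Bool) :
    bchi μ S x = ∏ i, bchi (muB μ i) (packF S i) (fun j => x (i, j)) := by
  unfold bchi
  exact prod_packF_split S _

lemma bexp_block_prod (μ : Fin k × Fin l → ℝ) (H : Fin k → (Fin l → Bool) → ℝ) :
    bexp μ (fun x => ∏ i, H i (fun j => x (i, j))) = ∏ i, bexp (muB μ i) (H i) := by
  unfold bexp
  rw [← Equiv.sum_comp ((Equiv.curry (Fin k) (Fin l) Bool).symm)]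
  have hw : ∀ y : Fin k → Fin l → Bool,
      bweight μ ((Equiv.curry (Fin k) (Fin l) Bool).symm y) = ∏ i, bweight (muB μ i) (y i) := by
    intro y
    unfold bweight
    rw [Fintype.prod_prod_type]
    rfl
  have step : ∀ y : Fin k → Fin l → Bool,
      bweight μ ((Equiv.curry (Fin k) (Fin l) Bool).symm y)
        * ∏ i, H i (fun j => ((Equiv.curry (Fin k) (Fin l) Bool).symm y) (i, j))
      = ∏ i, (bweight (muB μ i) (y i) * H i (y i)) := by
    intro y
    rw [hw y, ← Finset.prod_mul_distrib]
    rfl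
  rw [Finset.sum_congr rfl fun y _ => step y]
  rw [← Fintype.prod_sum (fun i (z : Fin l → Bool) => bweight (muB μ i) z * H i z)]

lemma bexp_single_block (μ : Fin k × Fin l → ℝ) (i : Fin k) (h : (Fin l → Bool) → ℝ) :
    bexp μ (fun x => h (fun j => x (i, j))) = bexp (muB μ i) h := by
  have key := bexp_block_prod μ (fun i' => if i' = i then h else fun _ => 1)
  have e1 : ∀ x : Fin k × Fin l → Bool,
      (∏ i', (if i' = i then h else fun _ => 1) (fun j => x (i', j))) = h (fun j => x (i, j)) := by
    intro x
    rw [Finset.prod_eq_single i]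
    · rw [if_pos rfl]
    · intro i' _ hne; rw [if_neg hne]
    · intro hni; exact absurd (Finset.mem_univ i) hni
  rw [bexp_congr e1] at key
  rw [key, Finset.prod_eq_single i]
  · rw [if_pos rfl]
  · intro i' _ hne; rw [if_neg hne, bexp_const]
  · intro hni; exact absurd (Finset.mem_univ i) hni

end ProductSpace

lemma bexp_add {ι : Type*} [Fintype ι] [DecidableEq ι] (μ : ι → ℝ) (h1 h2 : (ι → Bool) → ℝ) :
    bexp μ (fun x => h1 x + h2 x) = bexp μ h1 + bexp μ h2 := by
  unfold bexp
  rw [← Finset.sum_add_distrib]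
  exact Finset.sum_congr rfl fun x _ => by ring

section Comp
variable {k l : ℕ}

/-- The `i`-th inner function as a function of its own block. -/
def bG (g : Fin k → ((Fin k × Fin l → Bool) → Bool)) (i : Fin k) : (Fin l → Bool) → ℝ :=
  fun z => b2r (g i (fun p => z p.2))

/-- Vector of means of the inner functions. -/
def etaF (μ : Fin k × Fin l → ℝ) (g : Fin k → ((Fin k × Fin l → Bool) → Bool)) : Fin k → ℝ :=
  fun i => bexp μ (fun x => b2r (g i x))

/-- Block Fourier coefficients of the inner functions. -/
def cB (μ : Fin k × Fin l → ℝ) (g : Fin k → ((Fin k × Fin l → Bool) → Bool)) (i : Fin k)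
    (A : Finset (Fin l)) : ℝ :=
  bcoeff (muB μ i) (bG g i) A

/-- Block support of a family of block sets. -/
def TsetF (s : Fin k → Finset (Fin l)) : Finset (Fin k) :=
  Finset.univ.filter (fun i => s i ≠ ∅)

lemma muB_valid {μ : Fin k × Fin l → ℝ} (hμ : validBias μ) (i : Fin k) :
    validBias (muB μ i) := fun j => hμ (i, j)

lemma mem_TsetF {s : Fin k → Finset (Fin l)} {i : Fin k} : i ∈ TsetF s ↔ s i ≠ ∅ := by
  simp [TsetF]

variable (μ : Fin k × Fin l → ℝ) (g : Fin k → ((Fin k × Fin l → Bool) → Bool))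

lemma g_block (hblock : ∀ (i : Fin k) (x y : Fin k × Fin l → Bool),
      (∀ j : Fin l, x (i, j) = y (i, j)) → g i x = g i y) (i : Fin k) (x : Fin k × Fin l → Bool) :
    b2r (g i x) = bG g i (fun j => x (i, j)) := by
  unfold bG
  congr 1
  exact hblock i x _ (fun j => rfl)

lemma eta_valid (hμ : validBias μ) (hnc : ∀ i, ∃ x y, g i x ≠ g i y) :
    validBias (etaF μ g) := by
  intro i
  obtain ⟨x, y, hxy⟩ := hnc i
  constructor
  · cases hx : g i x
    · cases hy : g i y
      · exact absurd (hx.trans hy.symm) hxy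
      · exact bool_mean_gt hμ (g i) y hy
    · exact bool_mean_gt hμ (g i) x hx
  · cases hx : g i x
    · exact bool_mean_lt_one hμ (g i) x hx
    · cases hy : g i y
      · exact bool_mean_lt_one hμ (g i) y hy
      · exact absurd (hx.trans hy.symm) hxy

lemma bexp_bG (hblock : ∀ (i : Fin k) (x y : Fin k × Fin l → Bool),
      (∀ j : Fin l, x (i, j) = y (i, j)) → g i x = g i y) (i : Fin k) :
    bexp (muB μ i) (bG g i) = etaF μ g i := by
  rw [← bexp_single_block μ i (bG g i)]
  exact (bexp_congr (fun x => g_block g hblock i x)).symm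

lemma cB_empty (hblock : ∀ (i : Fin k) (x y : Fin k × Fin l → Bool),
      (∀ j : Fin l, x (i, j) = y (i, j)) → g i x = g i y) (i : Fin k) :
    cB μ g i ∅ = etaF μ g i := by
  unfold cB
  rw [bcoeff_empty, bexp_bG μ g hblock]

lemma cB_parseval (hμ : validBias μ) (i : Fin k) : ∑ A : Finset (Fin l), cB μ g i A ^ 2 = 1 := by
  unfold cB
  rw [parseval (muB_valid hμ i)]
  have : ∀ z : Fin l → Bool, bG g i z ^ 2 = 1 := fun z => b2r_sq _
  rw [bexp_congr this, bexp_const]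

lemma cB_var (hμ : validBias μ) (hblock : ∀ (i : Fin k) (x y : Fin k × Fin l → Bool),
      (∀ j : Fin l, x (i, j) = y (i, j)) → g i x = g i y) (i : Fin k) :
    ∑ A ∈ (Finset.univ : Finset (Finset (Fin l))).erase ∅, cB μ g i A ^ 2
      = 1 - etaF μ g i ^ 2 := by
  rw [Finset.sum_erase_eq_sub (Finset.mem_univ ∅), cB_parseval μ g hμ, cB_empty μ g hblock]

/-- Fourier coefficients of a single inner function on the full space. -/
lemma coeff_g (hμ : validBias μ) (hblock : ∀ (i : Fin k) (x y : Fin k × Fin l → Bool),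
      (∀ j : Fin l, x (i, j) = y (i, j)) → g i x = g i y)
    (i : Fin k) (s : Fin k → Finset (Fin l)) :
    bcoeff μ (fun x => b2r (g i x)) (unpackF s)
      = cB μ g i (s i) * ∏ i' ∈ Finset.univ.erase i, (if s i' = ∅ then (1:ℝ) else 0) := by
  unfold bcoeff
  have e1 : ∀ x : Fin k × Fin l → Bool,
      b2r (g i x) * bchi μ (unpackF s) x
        = ∏ i', ((if i' = i then bG g i else fun _ => 1) (fun j => x (i', j))
            * bchi (muB μ i') (s i') (fun j => x (i', j))) := by
    intro x
    rw [Finset.prod_mul_distrib, g_block g hblock i x, bchi_split μ, packF_unpackF]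
    congr 1
    rw [Finset.prod_eq_single i]
    · rw [if_pos rfl]
    · intro i' _ hne; rw [if_neg hne]
    · intro hni; exact absurd (Finset.mem_univ i) hni
  rw [bexp_congr e1, bexp_block_prod μ
    (fun i' z => (if i' = i then bG g i else fun _ => 1) z * bchi (muB μ i') (s i') z)]
  rw [← Finset.mul_prod_erase Finset.univ _ (Finset.mem_univ i), if_pos rfl]
  congr 1
  exact Finset.prod_congr rfl fun i' hi' => by
    rw [if_neg (Finset.mem_erase.mp hi').1]
    have : ∀ z : Fin l → Bool, (fun _ : Fin l → Bool => (1:ℝ)) z * bchi (muB μ i') (s i') z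
        = bchi (muB μ i') (s i') z := fun z => one_mul _
    rw [bexp_congr this, bexp_bchi (muB_valid hμ i')]
end Comp

section Master
variable {k l : ℕ} (μ : Fin k × Fin l → ℝ) (g : Fin k → ((Fin k × Fin l → Bool) → Bool))

/-- Master composition identity for Fourier coefficients. -/
lemma coeff_comp (hμ : validBias μ)
    (hblock : ∀ (i : Fin k) (x y : Fin k × Fin l → Bool),
      (∀ j : Fin l, x (i, j) = y (i, j)) → g i x = g i y)
    (hη : validBias (etaF μ g)) (F : (Fin k → Bool) → ℝ) (s : Fin k → Finset (Fin l)) :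
    bcoeff μ (fun x => F (fun i => g i x)) (unpackF s)
      = bcoeff (etaF μ g) F (TsetF s)
        * ∏ i ∈ TsetF s, (cB μ g i (s i) / Real.sqrt (1 - etaF μ g i ^ 2)) := by
  set η := etaF μ g with hetadef
  unfold bcoeff
  have inv : ∀ x : Fin k × Fin l → Bool,
      F (fun i => g i x) * bchi μ (unpackF s) x
        = ∑ T : Finset (Fin k), bcoeff η F T
            * (bchi η T (fun i => g i x) * bchi μ (unpackF s) x) := by
    intro x
    rw [← inversion hη F (fun i => g i x), Finset.sum_mul]
    exact Finset.sum_congr rfl fun T _ => by ring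
  rw [bexp_congr inv, bexp_sum]
  have pull : ∀ T : Finset (Fin k), bexp μ (fun x => bcoeff η F T
      * (bchi η T (fun i => g i x) * bchi μ (unpackF s) x))
      = bcoeff η F T * bexp μ (fun x => bchi η T (fun i => g i x) * bchi μ (unpackF s) x) :=
    fun T => bexp_smul μ _ _
  rw [Finset.sum_congr rfl fun T _ => pull T]
  -- compute the inner expectation for each T
  have inner : ∀ T : Finset (Fin k),
      bexp μ (fun x => bchi η T (fun i => g i x) * bchi μ (unpackF s) x)
        = ∏ i, (if i ∈ T
            then (cB μ g i (s i) - η i * (if s i = ∅ then 1 else 0))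
              / Real.sqrt (1 - η i ^ 2)
            else (if s i = ∅ then (1:ℝ) else 0)) := by
    intro T
    have split : ∀ x : Fin k × Fin l → Bool,
        bchi η T (fun i => g i x) * bchi μ (unpackF s) x
          = ∏ i, ((if i ∈ T
                then (bG g i (fun j => x (i, j)) - η i) / Real.sqrt (1 - η i ^ 2)
                else 1)
              * bchi (muB μ i) (s i) (fun j => x (i, j))) := by
      intro x
      rw [Finset.prod_mul_distrib, bchi_split μ, packF_unpackF]
      congr 1
      unfold bchi
      rw [← prod_univ_ite T (fun i => (b2r (g i x) - η i) / Real.sqrt (1 - η i ^ 2))]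
      refine Finset.prod_congr rfl fun i _ => ?_
      rw [g_block g hblock i x]
    rw [bexp_congr split, bexp_block_prod μ (fun i z =>
        (if i ∈ T then (bG g i z - η i) / Real.sqrt (1 - η i ^ 2) else 1)
          * bchi (muB μ i) (s i) z)]
    refine Finset.prod_congr rfl fun i _ => ?_
    by_cases hiT : i ∈ T
    · simp only [hiT, if_true]
      have expand : ∀ z : Fin l → Bool,
          ((bG g i z - η i) / Real.sqrt (1 - η i ^ 2)) * bchi (muB μ i) (s i) z
            = (1 / Real.sqrt (1 - η i ^ 2)) * (bG g i z * bchi (muB μ i) (s i) z)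
              + (-(η i / Real.sqrt (1 - η i ^ 2))) * bchi (muB μ i) (s i) z := by
        intro z; ring
      rw [bexp_congr expand, bexp_add, bexp_smul, bexp_smul,
        bexp_bchi (muB_valid hμ i)]
      show (1 / Real.sqrt (1 - η i ^ 2)) * cB μ g i (s i) + _ = _
      by_cases hsi : s i = ∅ <;> simp only [hsi, if_true, if_false] <;> field_simp <;> ring
    · simp only [hiT, if_false]
      have expand : ∀ z : Fin l → Bool,
          (1:ℝ) * bchi (muB μ i) (s i) z = bchi (muB μ i) (s i) z := fun z => one_mul _
      rw [bexp_congr expand, bexp_bchi (muB_valid hμ i)]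
  rw [Finset.sum_congr rfl fun T _ => by rw [inner T]]
  -- the product vanishes unless T = TsetF s
  have collapse : ∀ T : Finset (Fin k),
      (∏ i, (if i ∈ T
          then (cB μ g i (s i) - η i * (if s i = ∅ then 1 else 0)) / Real.sqrt (1 - η i ^ 2)
          else (if s i = ∅ then (1:ℝ) else 0)))
        = if T = TsetF s
            then ∏ i ∈ TsetF s, (cB μ g i (s i) / Real.sqrt (1 - η i ^ 2))
            else 0 := by
    intro T
    by_cases hT : T = TsetF s
    · subst hT
      rw [if_pos rfl, ← prod_univ_ite (TsetF s)
        (fun i => cB μ g i (s i) / Real.sqrt (1 - η i ^ 2))]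
      refine Finset.prod_congr rfl fun i _ => ?_
      by_cases hi : i ∈ TsetF s
      · rw [if_pos hi, if_pos hi, if_neg (mem_TsetF.mp hi), mul_zero, sub_zero]
      · rw [if_neg hi, if_neg hi]
        have : s i = ∅ := by
          by_contra hc; exact hi (mem_TsetF.mpr hc)
        rw [if_pos this]
    · rw [if_neg hT]
      have : ∃ i, ¬((i ∈ T) ↔ (i ∈ TsetF s)) := by
        by_contra hc; push_neg at hc
        exact hT (Finset.ext fun i => hc i)
      obtain ⟨i, hi⟩ := this
      apply Finset.prod_eq_zero (Finset.mem_univ i)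
      by_cases hiT : i ∈ T
      · rw [if_pos hiT]
        have hsi : s i = ∅ := by
          by_contra hc
          exact hi (iff_of_true hiT (mem_TsetF.mpr hc))
        rw [if_pos hsi, mul_one, hsi, cB_empty μ g hblock, ← hetadef, sub_self, zero_div]
      · rw [if_neg hiT]
        have hsi : s i ≠ ∅ := by
          intro hc
          exact hi (iff_of_false hiT (fun hm => (mem_TsetF.mp hm) hc))
        rw [if_neg hsi]
  rw [Finset.sum_congr rfl fun T _ => by rw [collapse T]]
  rw [Finset.sum_eq_single (TsetF s)]
  · rw [if_pos rfl]; rfl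
  · intro T _ hne; rw [if_neg hne, mul_zero]
  · intro hni; exact absurd (Finset.mem_univ _) hni

end Master

section Sums
variable {k l : ℕ}

lemma L0 (h : Fin k → Finset (Fin l) → ℝ) :
    ∑ s : Fin k → Finset (Fin l), ∏ i, h i (s i) = ∏ i, ∑ A : Finset (Fin l), h i A :=
  (Fintype.prod_sum h).symm

lemma L1 (u h : Fin k → Finset (Fin l) → ℝ) :
    ∑ s : Fin k → Finset (Fin l), (∑ i, u i (s i)) * ∏ i, h i (s i)
      = ∑ i, (∑ A : Finset (Fin l), u i A * h i A)
          * ∏ i' ∈ Finset.univ.erase i, (∑ A : Finset (Fin l), h i' A) := by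
  have e1 : ∀ s : Fin k → Finset (Fin l), (∑ i, u i (s i)) * ∏ i, h i (s i)
      = ∑ i, ∏ i', Function.update h i (fun A => u i A * h i A) i' (s i') := by
    intro s
    rw [Finset.sum_mul]
    refine Finset.sum_congr rfl fun i _ => ?_
    rw [← Finset.mul_prod_erase Finset.univ
        (fun i' => Function.update h i (fun A => u i A * h i A) i' (s i')) (Finset.mem_univ i),
      ← Finset.mul_prod_erase Finset.univ (fun i' => h i' (s i')) (Finset.mem_univ i)]
    rw [show (∏ i' ∈ Finset.univ.erase i,
        Function.update h i (fun A => u i A * h i A) i' (s i'))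
        = ∏ i' ∈ Finset.univ.erase i, h i' (s i') from
      Finset.prod_congr rfl (fun i' hi' =>
        congrFun (Function.update_of_ne (Finset.mem_erase.mp hi').1 _ _) _)]
    rw [Function.update_self]
    ring
  rw [Finset.sum_congr rfl fun s _ => e1 s, Finset.sum_comm]
  refine Finset.sum_congr rfl fun i _ => ?_
  rw [L0 (Function.update h i (fun A => u i A * h i A))]
  rw [← Finset.mul_prod_erase Finset.univ
      (fun i' => ∑ A : Finset (Fin l), Function.update h i (fun A => u i A * h i A) i' A)
      (Finset.mem_univ i)]
  rw [Function.update_self]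
  congr 1
  exact Finset.prod_congr rfl fun i' hi' => by
    rw [Function.update_of_ne (Finset.mem_erase.mp hi').1]

end Sums

section SpecG
variable {k l : ℕ}

/-- Indicator of the empty set. -/
def e0 : Finset (Fin l) → ℝ := fun A => if A = ∅ then 1 else 0

lemma sum_e0 : ∑ A : Finset (Fin l), e0 A = 1 := by
  unfold e0; simp

lemma e0_sq (A : Finset (Fin l)) : e0 A ^ 2 = e0 A := by
  unfold e0; by_cases h : A = ∅ <;> simp [h]

lemma prod_update_form (i : Fin k) (φ : Finset (Fin l) → ℝ) (s : Fin k → Finset (Fin l)) :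
    ∏ i', Function.update (fun _ : Fin k => (e0 : Finset (Fin l) → ℝ)) i φ i' (s i')
      = φ (s i) * ∏ i' ∈ Finset.univ.erase i, e0 (s i') := by
  rw [← Finset.mul_prod_erase Finset.univ _ (Finset.mem_univ i), Function.update_self]
  congr 1
  exact Finset.prod_congr rfl fun i' hi' =>
    congrFun (Function.update_of_ne (Finset.mem_erase.mp hi').1 _ _) _

lemma sum_single_block (i : Fin k) (φ : Finset (Fin l) → ℝ) :
    ∑ s : Fin k → Finset (Fin l), φ (s i) * ∏ i' ∈ Finset.univ.erase i, e0 (s i')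
      = ∑ A : Finset (Fin l), φ A := by
  rw [← Finset.sum_congr rfl fun s _ => prod_update_form i φ s]
  rw [L0 (Function.update (fun _ : Fin k => (e0 : Finset (Fin l) → ℝ)) i φ)]
  rw [← Finset.mul_prod_erase Finset.univ _ (Finset.mem_univ i), Function.update_self]
  have : ∀ i' ∈ Finset.univ.erase i,
      (∑ A : Finset (Fin l), Function.update (fun _ : Fin k => (e0 : Finset (Fin l) → ℝ)) i φ i' A)
        = 1 := by
    intro i' hi'
    rw [show (fun A => Function.update (fun _ : Fin k => (e0 : Finset (Fin l) → ℝ)) i φ i' A)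
        = e0 from by
      funext A
      rw [Function.update_of_ne (Finset.mem_erase.mp hi').1]]
    exact sum_e0
  rw [Finset.prod_congr rfl this, Finset.prod_const_one, mul_one]

variable (μ : Fin k × Fin l → ℝ) (g : Fin k → ((Fin k × Fin l → Bool) → Bool))

/-- Squared coefficients of an inner function in product form. -/
lemma coeff_g_sq (hμ : validBias μ)
    (hblock : ∀ (i : Fin k) (x y : Fin k × Fin l → Bool),
      (∀ j : Fin l, x (i, j) = y (i, j)) → g i x = g i y)
    (i : Fin k) (s : Fin k → Finset (Fin l)) :
    (bcoeff μ (fun x => b2r (g i x)) (unpackF s)) ^ 2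
      = cB μ g i (s i) ^ 2 * ∏ i' ∈ Finset.univ.erase i, e0 (s i') := by
  rw [coeff_g μ g hμ hblock i s, mul_pow, ← Finset.prod_pow]
  congr 1
  exact Finset.prod_congr rfl fun i' _ => e0_sq (s i')

lemma coeff_g_empty (i : Fin k) :
    bcoeff μ (fun x => b2r (g i x)) ∅ = etaF μ g i := by
  rw [bcoeff_empty]; rfl

lemma var_g (hμ : validBias μ)
    (hblock : ∀ (i : Fin k) (x y : Fin k × Fin l → Bool),
      (∀ j : Fin l, x (i, j) = y (i, j)) → g i x = g i y) (i : Fin k) :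
    bVar μ (fun x => b2r (g i x)) = 1 - etaF μ g i ^ 2 := by
  unfold bVar
  rw [Finset.sum_erase_eq_sub (Finset.mem_univ ∅), coeff_g_empty]
  rw [sum_unpackF (fun S => (bcoeff μ (fun x => b2r (g i x)) S) ^ 2)]
  rw [Finset.sum_congr rfl fun s _ => coeff_g_sq μ g hμ hblock i s]
  rw [sum_single_block i (fun A => cB μ g i A ^ 2), cB_parseval μ g hμ i]

lemma inf_g (hμ : validBias μ)
    (hblock : ∀ (i : Fin k) (x y : Fin k × Fin l → Bool),
      (∀ j : Fin l, x (i, j) = y (i, j)) → g i x = g i y) (i : Fin k) :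
    bInf μ (fun x => b2r (g i x)) = bInf (muB μ i) (bG g i) := by
  unfold bInf
  rw [sum_unpackF (fun S => (S.card : ℝ) * (bcoeff μ (fun x => b2r (g i x)) S) ^ 2)]
  have e1 : ∀ s : Fin k → Finset (Fin l),
      ((unpackF s).card : ℝ) * (bcoeff μ (fun x => b2r (g i x)) (unpackF s)) ^ 2
        = (∑ i', ((s i').card : ℝ))
            * ∏ i', Function.update (fun _ : Fin k => (e0 : Finset (Fin l) → ℝ)) i
                (fun A => cB μ g i A ^ 2) i' (s i') := by
    intro s
    rw [coeff_g_sq μ g hμ hblock i s, card_packF (unpackF s), prod_update_form]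
    simp only [packF_unpackF]
  rw [Finset.sum_congr rfl fun s _ => e1 s,
    L1 (fun _ A => ((A.card : ℕ) : ℝ))
      (Function.update (fun _ : Fin k => (e0 : Finset (Fin l) → ℝ)) i (fun A => cB μ g i A ^ 2))]
  rw [Finset.sum_eq_single i]
  · rw [Function.update_self]
    have : ∀ i' ∈ Finset.univ.erase i,
        (∑ A : Finset (Fin l),
          Function.update (fun _ : Fin k => (e0 : Finset (Fin l) → ℝ)) i
            (fun A => cB μ g i A ^ 2) i' A) = 1 := by
      intro i' hi'
      rw [show (fun A => Function.update (fun _ : Fin k => (e0 : Finset (Fin l) → ℝ)) i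
          (fun A => cB μ g i A ^ 2) i' A) = e0 from by
        funext A
        rw [Function.update_of_ne (Finset.mem_erase.mp hi').1]]
      exact sum_e0
    rw [Finset.prod_congr rfl this, Finset.prod_const_one, mul_one]
    rfl
  · intro i' _ hne
    have : ∀ A : Finset (Fin l),
        ((A.card : ℕ) : ℝ) * Function.update (fun _ : Fin k => (e0 : Finset (Fin l) → ℝ)) i
          (fun A => cB μ g i A ^ 2) i' A = ((A.card : ℕ) : ℝ) * e0 A := by
      intro A
      rw [show (Function.update (fun _ : Fin k => (e0 : Finset (Fin l) → ℝ)) i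
          (fun A => cB μ g i A ^ 2) i') = e0 from Function.update_of_ne hne _ _]
      
    rw [Finset.sum_congr rfl fun A _ => this A]
    have : ∀ A : Finset (Fin l), ((A.card : ℕ) : ℝ) * e0 A = 0 := by
      intro A
      unfold e0
      by_cases hA : A = ∅ <;> simp [hA]
    rw [Finset.sum_congr rfl fun A _ => this A, Finset.sum_const_zero, zero_mul]
  · intro hni; exact absurd (Finset.mem_univ _) hni

end SpecG

section EntG
variable {k l : ℕ}

/-- Block product of variances `∏_{j∈A} σ_{ij}²`. -/
def WB (μ : Fin k × Fin l → ℝ) (i : Fin k) (A : Finset (Fin l)) : ℝ :=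
  ∏ j ∈ A, (1 - muB μ i j ^ 2)

lemma WB_pos {μ : Fin k × Fin l → ℝ} (hμ : validBias μ) (i : Fin k) (A : Finset (Fin l)) :
    0 < WB μ i A :=
  Finset.prod_pos fun j _ => sig_pos (muB_valid hμ i) j

lemma WB_empty (μ : Fin k × Fin l → ℝ) (i : Fin k) : WB μ i ∅ = 1 := Finset.prod_empty

lemma W_split (μ : Fin k × Fin l → ℝ) (s : Fin k → Finset (Fin l)) :
    (∏ p ∈ unpackF s, (1 - μ p ^ 2)) = ∏ i, WB μ i (s i) := by
  rw [prod_packF_split (unpackF s) (fun p => 1 - μ p ^ 2)]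
  exact Finset.prod_congr rfl fun i _ => by rw [packF_unpackF]; rfl

variable (μ : Fin k × Fin l → ℝ) (g : Fin k → ((Fin k × Fin l → Bool) → Bool))

lemma ent_g (hμ : validBias μ)
    (hblock : ∀ (i : Fin k) (x y : Fin k × Fin l → Bool),
      (∀ j : Fin l, x (i, j) = y (i, j)) → g i x = g i y) (i : Fin k) :
    bEnt1 μ (fun x => b2r (g i x)) = bEnt1 (muB μ i) (bG g i) := by
  unfold bEnt1
  rw [Finset.sum_erase_eq_sub (Finset.mem_univ ∅), Finset.sum_erase_eq_sub (Finset.mem_univ ∅)]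
  have hempty : bcoeff μ (fun x => b2r (g i x)) ∅ = bcoeff (muB μ i) (bG g i) ∅ := by
    rw [coeff_g_empty μ g i, bcoeff_empty, bexp_bG μ g hblock]
  have hfull : ∑ S : Finset (Fin k × Fin l),
      (bcoeff μ (fun x => b2r (g i x)) S) ^ 2
        * Real.logb 2 ((∏ p ∈ S, (1 - μ p ^ 2)) / (bcoeff μ (fun x => b2r (g i x)) S) ^ 2)
      = ∑ A : Finset (Fin l), (bcoeff (muB μ i) (bG g i) A) ^ 2
          * Real.logb 2 ((∏ j ∈ A, (1 - muB μ i j ^ 2)) / (bcoeff (muB μ i) (bG g i) A) ^ 2) := by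
    rw [sum_unpackF]
    have term : ∀ s : Fin k → Finset (Fin l),
        (bcoeff μ (fun x => b2r (g i x)) (unpackF s)) ^ 2
          * Real.logb 2 ((∏ p ∈ unpackF s, (1 - μ p ^ 2))
              / (bcoeff μ (fun x => b2r (g i x)) (unpackF s)) ^ 2)
        = (fun A => cB μ g i A ^ 2 * Real.logb 2 (WB μ i A / cB μ g i A ^ 2)) (s i)
            * ∏ i' ∈ Finset.univ.erase i, e0 (s i') := by
      intro s
      by_cases hsup : ∀ i' ∈ Finset.univ.erase i, s i' = ∅
      · have hind : ∏ i' ∈ Finset.univ.erase i, e0 (s i') = 1 :=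
          Finset.prod_eq_one fun i' hi' => by unfold e0; rw [if_pos (hsup i' hi')]
        have hcoeff : bcoeff μ (fun x => b2r (g i x)) (unpackF s) = cB μ g i (s i) := by
          rw [coeff_g μ g hμ hblock i s]
          have : ∏ i' ∈ Finset.univ.erase i, (if s i' = ∅ then (1:ℝ) else 0) = 1 :=
            Finset.prod_eq_one fun i' hi' => by rw [if_pos (hsup i' hi')]
          rw [this, mul_one]
        have hW : (∏ p ∈ unpackF s, (1 - μ p ^ 2)) = WB μ i (s i) := by
          rw [W_split μ s, ← Finset.mul_prod_erase Finset.univ _ (Finset.mem_univ i)]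
          have : ∏ i' ∈ Finset.univ.erase i, WB μ i' (s i') = 1 :=
            Finset.prod_eq_one fun i' hi' => by rw [hsup i' hi', WB_empty]
          rw [this, mul_one]
        rw [hcoeff, hW, hind, mul_one]
      · push_neg at hsup
        obtain ⟨i', hi', hne⟩ := hsup
        have hind : ∏ i'' ∈ Finset.univ.erase i, e0 (s i'') = 0 :=
          Finset.prod_eq_zero hi' (by unfold e0; rw [if_neg hne.ne_empty])
        have hcoeff : bcoeff μ (fun x => b2r (g i x)) (unpackF s) = 0 := by
          rw [coeff_g μ g hμ hblock i s]
          have : ∏ i'' ∈ Finset.univ.erase i, (if s i'' = ∅ then (1:ℝ) else 0) = 0 :=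
            Finset.prod_eq_zero hi' (by rw [if_neg hne.ne_empty])
          rw [this, mul_zero]
        rw [hcoeff, hind, mul_zero]
        norm_num
    rw [Finset.sum_congr rfl fun s _ => term s]
    rw [sum_single_block i (fun A => cB μ g i A ^ 2 * Real.logb 2 (WB μ i A / cB μ g i A ^ 2))]
    rfl
  rw [hfull, hempty]
  simp [Finset.prod_empty]

end EntG

lemma sum_univ_ite {α : Type*} [Fintype α] [DecidableEq α] (T : Finset α) (f : α → ℝ) :
    ∑ i, (if i ∈ T then f i else 0) = ∑ i ∈ T, f i := by
  rw [← Finset.sum_filter]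
  congr 1
  exact Finset.filter_mem_eq_inter.trans (by simp)

lemma sum_erase_empty {α : Type*} [Fintype α] [DecidableEq α] {v : Finset α → ℝ} (hv : v ∅ = 0) :
    ∑ A : Finset α, v A = ∑ A ∈ (univ : Finset (Finset α)).erase ∅, v A := by
  rw [Finset.sum_erase_eq_sub (Finset.mem_univ ∅), hv, sub_zero]

section SpecF
variable {k l : ℕ} (μ : Fin k × Fin l → ℝ) (g : Fin k → ((Fin k × Fin l → Bool) → Bool))

/-- Fiber indicator factors. -/
def DT (μ : Fin k × Fin l → ℝ) (g : Fin k → ((Fin k × Fin l → Bool) → Bool))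
    (T : Finset (Fin k)) (i : Fin k) (A : Finset (Fin l)) : ℝ :=
  if i ∈ T then (if A = ∅ then 0 else cB μ g i A ^ 2 / (1 - etaF μ g i ^ 2)) else e0 A

variable (hμ : validBias μ)
  (hblock : ∀ (i : Fin k) (x y : Fin k × Fin l → Bool),
      (∀ j : Fin l, x (i, j) = y (i, j)) → g i x = g i y)
  (hnc : ∀ i, ∃ x y, g i x ≠ g i y)

include hμ hblock hnc in
lemma sum_DT (T : Finset (Fin k)) (i : Fin k) : ∑ A : Finset (Fin l), DT μ g T i A = 1 := by
  unfold DT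
  by_cases hiT : i ∈ T
  · simp only [hiT, if_true]
    rw [sum_erase_empty (by rw [if_pos rfl])]
    rw [Finset.sum_congr rfl fun A hA => if_neg (Finset.mem_erase.mp hA).1,
      ← Finset.sum_div, cB_var μ g hμ hblock i]
    exact div_self (ne_of_gt (sig_pos (eta_valid μ g hμ hnc) i))
  · simp only [hiT, if_false]
    exact sum_e0

lemma DT_prod (T : Finset (Fin k)) (s : Fin k → Finset (Fin l)) :
    ∏ i, DT μ g T i (s i)
      = if TsetF s = T then ∏ i ∈ T, cB μ g i (s i) ^ 2 / (1 - etaF μ g i ^ 2) else 0 := by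
  by_cases h : TsetF s = T
  · rw [if_pos h, ← h, ← prod_univ_ite (TsetF s)
      (fun i => cB μ g i (s i) ^ 2 / (1 - etaF μ g i ^ 2))]
    refine Finset.prod_congr rfl fun i _ => ?_
    unfold DT
    by_cases hi : i ∈ TsetF s
    · simp only [hi, if_true]
      rw [if_neg (mem_TsetF.mp hi)]
    · simp only [hi, if_false]
      unfold e0
      rw [if_pos (by by_contra hc; exact hi (mem_TsetF.mpr hc))]
  · rw [if_neg h]
    have : ∃ i, ¬((i ∈ TsetF s) ↔ (i ∈ T)) := by
      by_contra hc; push_neg at hc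
      exact h (Finset.ext fun i => hc i)
    obtain ⟨i, hi⟩ := this
    apply Finset.prod_eq_zero (Finset.mem_univ i)
    unfold DT
    by_cases hiT : i ∈ T
    · simp only [hiT, if_true]
      have hsi : s i = ∅ := by
        by_contra hc
        exact hi (iff_of_true (mem_TsetF.mpr hc) hiT)
      rw [if_pos hsi]
    · simp only [hiT, if_false]
      have hsi : s i ≠ ∅ := by
        intro hc
        exact hi (iff_of_false (fun hm => (mem_TsetF.mp hm) hc) hiT)
      unfold e0
      rw [if_neg hsi]

include hμ hblock hnc in
lemma fiber_A (T : Finset (Fin k)) :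
    ∑ s ∈ Finset.univ.filter (fun s : Fin k → Finset (Fin l) => TsetF s = T),
        ∏ i ∈ T, cB μ g i (s i) ^ 2 / (1 - etaF μ g i ^ 2) = 1 := by
  rw [Finset.sum_filter]
  rw [Finset.sum_congr rfl fun s _ => (DT_prod μ g T s).symm]
  rw [L0 (DT μ g T)]
  exact Finset.prod_eq_one fun i _ => sum_DT μ g hμ hblock hnc T i

include hμ hblock hnc in
lemma fiber_B (T : Finset (Fin k)) (u : Fin k → Finset (Fin l) → ℝ) :
    ∑ s ∈ Finset.univ.filter (fun s : Fin k → Finset (Fin l) => TsetF s = T),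
        (∑ i, u i (s i)) * ∏ i ∈ T, cB μ g i (s i) ^ 2 / (1 - etaF μ g i ^ 2)
      = ∑ i, ∑ A : Finset (Fin l), u i A * DT μ g T i A := by
  rw [Finset.sum_filter]
  have term : ∀ s : Fin k → Finset (Fin l),
      (if TsetF s = T
        then (∑ i, u i (s i)) * ∏ i ∈ T, cB μ g i (s i) ^ 2 / (1 - etaF μ g i ^ 2)
        else 0)
      = (∑ i, u i (s i)) * ∏ i, DT μ g T i (s i) := by
    intro s
    rw [DT_prod μ g T s]
    by_cases h : TsetF s = T
    · rw [if_pos h, if_pos h]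
    · rw [if_neg h, if_neg h, mul_zero]
  rw [Finset.sum_congr rfl fun s _ => term s, L1 u (DT μ g T)]
  refine Finset.sum_congr rfl fun i _ => ?_
  rw [Finset.prod_congr rfl fun i' hi' => sum_DT μ g hμ hblock hnc T i',
    Finset.prod_const_one, mul_one]

end SpecF

section Assembly
variable {k l : ℕ} (μ : Fin k × Fin l → ℝ) (g : Fin k → ((Fin k × Fin l → Bool) → Bool))
variable (hμ : validBias μ)
  (hblock : ∀ (i : Fin k) (x y : Fin k × Fin l → Bool),
      (∀ j : Fin l, x (i, j) = y (i, j)) → g i x = g i y)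
  (hnc : ∀ i, ∃ x y, g i x ≠ g i y)

include hμ hblock hnc in
lemma coeff_f_sq (F : (Fin k → Bool) → ℝ) (s : Fin k → Finset (Fin l)) :
    (bcoeff μ (fun x => F (fun i => g i x)) (unpackF s)) ^ 2
      = (bcoeff (etaF μ g) F (TsetF s)) ^ 2
          * ∏ i ∈ TsetF s, cB μ g i (s i) ^ 2 / (1 - etaF μ g i ^ 2) := by
  rw [coeff_comp μ g hμ hblock (eta_valid μ g hμ hnc) F s, mul_pow, ← Finset.prod_pow]
  congr 1
  refine Finset.prod_congr rfl fun i _ => ?_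
  rw [div_pow, Real.sq_sqrt (le_of_lt (sig_pos (eta_valid μ g hμ hnc) i))]

lemma unpackF_const_empty : unpackF (fun _ : Fin k => (∅ : Finset (Fin l))) = ∅ := by
  ext p; rw [mem_unpackF]; simp

lemma TsetF_const_empty : TsetF (fun _ : Fin k => (∅ : Finset (Fin l))) = ∅ := by
  ext i; rw [mem_TsetF]; simp

include hμ hblock hnc in
lemma coeff_f_empty (F : (Fin k → Bool) → ℝ) :
    bcoeff μ (fun x => F (fun i => g i x)) ∅ = bcoeff (etaF μ g) F ∅ := by
  have := coeff_comp μ g hμ hblock (eta_valid μ g hμ hnc) F (fun _ => ∅)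
  rw [unpackF_const_empty, TsetF_const_empty] at this
  rw [this, Finset.prod_empty, mul_one]

include hμ hblock hnc in
lemma var_f_full (F : (Fin k → Bool) → ℝ) :
    ∑ S : Finset (Fin k × Fin l), (bcoeff μ (fun x => F (fun i => g i x)) S) ^ 2
      = ∑ T : Finset (Fin k), (bcoeff (etaF μ g) F T) ^ 2 := by
  rw [sum_unpackF (fun S => (bcoeff μ (fun x => F (fun i => g i x)) S) ^ 2)]
  rw [Finset.sum_congr rfl fun s _ => coeff_f_sq μ g hμ hblock hnc F s]
  rw [← Finset.sum_fiberwise Finset.univ TsetF (fun s => (bcoeff (etaF μ g) F (TsetF s)) ^ 2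
      * ∏ i ∈ TsetF s, cB μ g i (s i) ^ 2 / (1 - etaF μ g i ^ 2))]
  refine Finset.sum_congr rfl fun T _ => ?_
  rw [Finset.sum_congr rfl (fun s hs => by
    rw [(Finset.mem_filter.mp hs).2])]
  rw [← Finset.mul_sum, fiber_A μ g hμ hblock hnc T, mul_one]

include hμ hblock hnc in
lemma inner_inf (T : Finset (Fin k)) :
    ∑ i, ∑ A : Finset (Fin l), ((A.card : ℕ) : ℝ) * DT μ g T i A
      = ∑ i ∈ T, bInf (muB μ i) (bG g i) / (1 - etaF μ g i ^ 2) := by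
  rw [← sum_univ_ite T (fun i => bInf (muB μ i) (bG g i) / (1 - etaF μ g i ^ 2))]
  refine Finset.sum_congr rfl fun i _ => ?_
  unfold DT
  by_cases hiT : i ∈ T
  · simp only [hiT, if_true]
    have : ∀ A : Finset (Fin l),
        ((A.card : ℕ) : ℝ) * (if A = ∅ then 0 else cB μ g i A ^ 2 / (1 - etaF μ g i ^ 2))
          = (((A.card : ℕ) : ℝ) * cB μ g i A ^ 2) / (1 - etaF μ g i ^ 2) := by
      intro A
      by_cases hA : A = ∅
      · rw [if_pos hA, hA]; simp
      · rw [if_neg hA, mul_div_assoc]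
    rw [Finset.sum_congr rfl fun A _ => this A, ← Finset.sum_div]
    rfl
  · simp only [hiT, if_false]
    have : ∀ A : Finset (Fin l), ((A.card : ℕ) : ℝ) * e0 A = 0 := by
      intro A; unfold e0; by_cases hA : A = ∅ <;> simp [hA]
    rw [Finset.sum_congr rfl fun A _ => this A, Finset.sum_const_zero]

include hμ hblock hnc in
lemma inf_f (F : (Fin k → Bool) → ℝ) :
    bInf μ (fun x => F (fun i => g i x))
      = ∑ T : Finset (Fin k), (bcoeff (etaF μ g) F T) ^ 2
          * ∑ i ∈ T, bInf (muB μ i) (bG g i) / (1 - etaF μ g i ^ 2) := by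
  unfold bInf
  rw [sum_unpackF (fun S => (S.card : ℝ)
      * (bcoeff μ (fun x => F (fun i => g i x)) S) ^ 2)]
  have term : ∀ s : Fin k → Finset (Fin l),
      ((unpackF s).card : ℝ) * (bcoeff μ (fun x => F (fun i => g i x)) (unpackF s)) ^ 2
        = (bcoeff (etaF μ g) F (TsetF s)) ^ 2
            * ((∑ i, (((s i).card : ℕ) : ℝ))
                * ∏ i ∈ TsetF s, cB μ g i (s i) ^ 2 / (1 - etaF μ g i ^ 2)) := by
    intro s
    rw [coeff_f_sq μ g hμ hblock hnc F s, card_packF (unpackF s)]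
    simp only [packF_unpackF]
    ring
  rw [Finset.sum_congr rfl fun s _ => term s]
  rw [← Finset.sum_fiberwise Finset.univ TsetF (fun s => (bcoeff (etaF μ g) F (TsetF s)) ^ 2
      * ((∑ i, (((s i).card : ℕ) : ℝ))
          * ∏ i ∈ TsetF s, cB μ g i (s i) ^ 2 / (1 - etaF μ g i ^ 2)))]
  refine Finset.sum_congr rfl fun T _ => ?_
  rw [Finset.sum_congr rfl (fun s hs => by
    rw [(Finset.mem_filter.mp hs).2])]
  rw [← Finset.mul_sum, fiber_B μ g hμ hblock hnc T (fun _ A => ((A.card : ℕ) : ℝ)),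
    inner_inf μ g hμ hblock hnc T]
  rfl

end Assembly

section Entf
variable {k l : ℕ} (μ : Fin k × Fin l → ℝ) (g : Fin k → ((Fin k × Fin l → Bool) → Bool))
variable (hμ : validBias μ)
  (hblock : ∀ (i : Fin k) (x y : Fin k × Fin l → Bool),
      (∀ j : Fin l, x (i, j) = y (i, j)) → g i x = g i y)
  (hnc : ∀ i, ∃ x y, g i x ≠ g i y)

/-- Entropy weight function. -/
def uE (μ : Fin k × Fin l → ℝ) (g : Fin k → ((Fin k × Fin l → Bool) → Bool))
    (i : Fin k) (A : Finset (Fin l)) : ℝ :=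
  if A = ∅ then 0 else Real.logb 2 (WB μ i A / cB μ g i A ^ 2)

include hμ hblock hnc in
lemma inner_ent (T : Finset (Fin k)) :
    ∑ i, ∑ A : Finset (Fin l), uE μ g i A * DT μ g T i A
      = ∑ i ∈ T, bEnt1 (muB μ i) (bG g i) / (1 - etaF μ g i ^ 2) := by
  rw [← sum_univ_ite T (fun i => bEnt1 (muB μ i) (bG g i) / (1 - etaF μ g i ^ 2))]
  refine Finset.sum_congr rfl fun i _ => ?_
  unfold DT uE
  by_cases hiT : i ∈ T
  · simp only [hiT, if_true]
    have : ∀ A : Finset (Fin l),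
        (if A = ∅ then (0:ℝ) else Real.logb 2 (WB μ i A / cB μ g i A ^ 2))
            * (if A = ∅ then 0 else cB μ g i A ^ 2 / (1 - etaF μ g i ^ 2))
          = (if A = ∅ then 0
              else cB μ g i A ^ 2 * Real.logb 2 (WB μ i A / cB μ g i A ^ 2))
                / (1 - etaF μ g i ^ 2) := by
      intro A
      by_cases hA : A = ∅
      · rw [if_pos hA, if_pos hA, if_pos hA]; simp
      · rw [if_neg hA, if_neg hA, if_neg hA]; field_simp
    rw [Finset.sum_congr rfl fun A _ => this A, ← Finset.sum_div]
    congr 1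
    rw [sum_erase_empty (by rw [if_pos rfl])]
    refine Finset.sum_congr rfl fun A hA => ?_
    rw [if_neg (Finset.mem_erase.mp hA).1]
    rfl
  · simp only [hiT, if_false]
    have : ∀ A : Finset (Fin l),
        (if A = ∅ then (0:ℝ) else Real.logb 2 (WB μ i A / cB μ g i A ^ 2)) * e0 A = 0 := by
      intro A; unfold e0
      by_cases hA : A = ∅ <;> simp [hA]
    rw [Finset.sum_congr rfl fun A _ => this A, Finset.sum_const_zero]

include hμ hblock hnc in
lemma ent_term (F : (Fin k → Bool) → ℝ) (s : Fin k → Finset (Fin l)) :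
    (bcoeff μ (fun x => F (fun i => g i x)) (unpackF s)) ^ 2
        * Real.logb 2 ((∏ p ∈ unpackF s, (1 - μ p ^ 2))
            / (bcoeff μ (fun x => F (fun i => g i x)) (unpackF s)) ^ 2)
      = (bcoeff (etaF μ g) F (TsetF s)) ^ 2
          * Real.logb 2 ((∏ i ∈ TsetF s, (1 - etaF μ g i ^ 2))
              / (bcoeff (etaF μ g) F (TsetF s)) ^ 2)
          * ∏ i ∈ TsetF s, cB μ g i (s i) ^ 2 / (1 - etaF μ g i ^ 2)
        + (bcoeff (etaF μ g) F (TsetF s)) ^ 2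
            * ((∑ i, uE μ g i (s i))
                * ∏ i ∈ TsetF s, cB μ g i (s i) ^ 2 / (1 - etaF μ g i ^ 2)) := by
  have hη := eta_valid μ g hμ hnc
  set T := TsetF s with hT
  by_cases hF : bcoeff (etaF μ g) F T = 0
  · have hzero : bcoeff μ (fun x => F (fun i => g i x)) (unpackF s) = 0 := by
      rw [coeff_comp μ g hμ hblock hη F s, ← hT, hF, zero_mul]
    rw [hzero, hF]
    norm_num
  by_cases hc : ∀ i ∈ T, cB μ g i (s i) ≠ 0
  · -- main case
    have hσ : ∀ i, (0:ℝ) < 1 - etaF μ g i ^ 2 := fun i => sig_pos hη i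
    have hW : ∀ i, (0:ℝ) < WB μ i (s i) := fun i => WB_pos hμ i (s i)
    have hWfull : (∏ p ∈ unpackF s, (1 - μ p ^ 2)) = ∏ i ∈ T, WB μ i (s i) := by
      rw [W_split μ s, ← prod_univ_ite T (fun i => WB μ i (s i))]
      refine Finset.prod_congr rfl fun i _ => ?_
      by_cases hiT : i ∈ T
      · rw [if_pos hiT]
      · rw [if_neg hiT]
        have : s i = ∅ := by
          by_contra hcon; exact hiT (mem_TsetF.mpr hcon)
        rw [this, WB_empty]
    have hsq := coeff_f_sq μ g hμ hblock hnc F s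
    rw [← hT] at hsq
    -- ratio identity
    have hbne : (∏ i ∈ T, cB μ g i (s i) ^ 2) ≠ 0 :=
      Finset.prod_ne_zero_iff.mpr fun i hi => pow_ne_zero 2 (hc i hi)
    have hcne : (∏ i ∈ T, (1 - etaF μ g i ^ 2)) ≠ 0 :=
      Finset.prod_ne_zero_iff.mpr fun i _ => ne_of_gt (hσ i)
    have hFne : bcoeff (etaF μ g) F T ^ 2 ≠ 0 := pow_ne_zero 2 hF
    have hPsplit : (∏ i ∈ T, cB μ g i (s i) ^ 2 / (1 - etaF μ g i ^ 2))
        = (∏ i ∈ T, cB μ g i (s i) ^ 2) / (∏ i ∈ T, (1 - etaF μ g i ^ 2)) :=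
      Finset.prod_div_distrib _ _
    have hQsplit : (∏ i ∈ T, WB μ i (s i) / cB μ g i (s i) ^ 2)
        = (∏ i ∈ T, WB μ i (s i)) / (∏ i ∈ T, cB μ g i (s i) ^ 2) :=
      Finset.prod_div_distrib _ _
    have hratio : (∏ p ∈ unpackF s, (1 - μ p ^ 2))
          / (bcoeff μ (fun x => F (fun i => g i x)) (unpackF s)) ^ 2
        = ((∏ i ∈ T, (1 - etaF μ g i ^ 2)) / bcoeff (etaF μ g) F T ^ 2)
            * ∏ i ∈ T, WB μ i (s i) / cB μ g i (s i) ^ 2 := by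
      rw [hWfull, hsq, hPsplit, hQsplit]
      field_simp
    have hlog : Real.logb 2 ((∏ p ∈ unpackF s, (1 - μ p ^ 2))
          / (bcoeff μ (fun x => F (fun i => g i x)) (unpackF s)) ^ 2)
        = Real.logb 2 ((∏ i ∈ T, (1 - etaF μ g i ^ 2)) / bcoeff (etaF μ g) F T ^ 2)
            + ∑ i ∈ T, Real.logb 2 (WB μ i (s i) / cB μ g i (s i) ^ 2) := by
      rw [hratio, Real.logb_mul, Real.logb_prod]
      · intro i hi
        exact div_ne_zero (ne_of_gt (hW i)) (pow_ne_zero 2 (hc i hi))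
      · exact div_ne_zero hcne hFne
      · rw [hQsplit]
        exact div_ne_zero (Finset.prod_ne_zero_iff.mpr fun i _ => ne_of_gt (hW i)) hbne
    have husum : ∑ i ∈ T, Real.logb 2 (WB μ i (s i) / cB μ g i (s i) ^ 2)
        = ∑ i, uE μ g i (s i) := by
      rw [Finset.sum_congr rfl (fun i hi => show
          Real.logb 2 (WB μ i (s i) / cB μ g i (s i) ^ 2) = uE μ g i (s i) by
        unfold uE; rw [if_neg (mem_TsetF.mp (hT ▸ hi))])]
      refine Finset.sum_subset (Finset.subset_univ T) fun i _ hi => ?_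
      unfold uE
      rw [if_pos (by by_contra hcon; exact hi (hT ▸ mem_TsetF.mpr hcon))]
    rw [hlog, husum, hsq]
    ring
  · -- some inner coefficient vanishes
    push_neg at hc
    obtain ⟨i0, hi0, hc0⟩ := hc
    have hP : (∏ i ∈ T, cB μ g i (s i) ^ 2 / (1 - etaF μ g i ^ 2)) = 0 :=
      Finset.prod_eq_zero hi0 (by rw [hc0]; norm_num)
    have hzero : bcoeff μ (fun x => F (fun i => g i x)) (unpackF s) = 0 := by
      rw [coeff_comp μ g hμ hblock hη F s, ← hT]
      refine mul_eq_zero_of_right _ (Finset.prod_eq_zero hi0 ?_)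
      rw [hc0, zero_div]
    rw [hzero, hP]
    norm_num

include hμ hblock hnc in
lemma ent_f_full (F : (Fin k → Bool) → ℝ) :
    ∑ S : Finset (Fin k × Fin l),
        (bcoeff μ (fun x => F (fun i => g i x)) S) ^ 2
          * Real.logb 2 ((∏ p ∈ S, (1 - μ p ^ 2))
              / (bcoeff μ (fun x => F (fun i => g i x)) S) ^ 2)
      = ∑ T : Finset (Fin k), (bcoeff (etaF μ g) F T) ^ 2
            * Real.logb 2 ((∏ i ∈ T, (1 - etaF μ g i ^ 2)) / (bcoeff (etaF μ g) F T) ^ 2)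
        + ∑ T : Finset (Fin k), (bcoeff (etaF μ g) F T) ^ 2
            * ∑ i ∈ T, bEnt1 (muB μ i) (bG g i) / (1 - etaF μ g i ^ 2) := by
  rw [sum_unpackF (fun S => (bcoeff μ (fun x => F (fun i => g i x)) S) ^ 2
      * Real.logb 2 ((∏ p ∈ S, (1 - μ p ^ 2))
          / (bcoeff μ (fun x => F (fun i => g i x)) S) ^ 2))]
  rw [Finset.sum_congr rfl fun s _ => ent_term μ g hμ hblock hnc F s]
  rw [Finset.sum_add_distrib]
  congr 1
  · rw [← Finset.sum_fiberwise Finset.univ TsetF (fun s =>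
        (bcoeff (etaF μ g) F (TsetF s)) ^ 2
          * Real.logb 2 ((∏ i ∈ TsetF s, (1 - etaF μ g i ^ 2))
              / (bcoeff (etaF μ g) F (TsetF s)) ^ 2)
          * ∏ i ∈ TsetF s, cB μ g i (s i) ^ 2 / (1 - etaF μ g i ^ 2))]
    refine Finset.sum_congr rfl fun T _ => ?_
    rw [Finset.sum_congr rfl (fun s hs => by
      rw [(Finset.mem_filter.mp hs).2])]
    rw [← Finset.mul_sum, fiber_A μ g hμ hblock hnc T, mul_one]
  · rw [← Finset.sum_fiberwise Finset.univ TsetF (fun s =>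
        (bcoeff (etaF μ g) F (TsetF s)) ^ 2
          * ((∑ i, uE μ g i (s i))
              * ∏ i ∈ TsetF s, cB μ g i (s i) ^ 2 / (1 - etaF μ g i ^ 2)))]
    refine Finset.sum_congr rfl fun T _ => ?_
    rw [Finset.sum_congr rfl (fun s hs => by
      rw [(Finset.mem_filter.mp hs).2])]
    rw [← Finset.mul_sum, fiber_B μ g hμ hblock hnc T (uE μ g),
      inner_ent μ g hμ hblock hnc T]

end Entf


/-- Composition theorem for FEI⁺. -/
theorem stmt11 {k l : ℕ} (C : ℝ) (hC : 0 < C)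
    (μ : Fin k × Fin l → ℝ) (hμ : validBias μ)
    (F : (Fin k → Bool) → ℝ) (g : Fin k → ((Fin k × Fin l → Bool) → Bool))
    (hblock : ∀ (i : Fin k) (x y : Fin k × Fin l → Bool),
      (∀ j : Fin l, x (i, j) = y (i, j)) → g i x = g i y)
    (hnc : ∀ i, ∃ x y, g i x ≠ g i y)
    (h1 : ∀ i, bEnt1 μ (fun x => b2r (g i x))
      ≤ C * (bInf μ (fun x => b2r (g i x)) - bVar μ (fun x => b2r (g i x))))
    (h2 : bEnt1 (fun i => bexp μ (fun x => b2r (g i x))) F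
      ≤ C * (bInf (fun i => bexp μ (fun x => b2r (g i x))) F
              - bVar (fun i => bexp μ (fun x => b2r (g i x))) F)) :
    bEnt1 μ (fun x => F (fun i => g i x))
      ≤ C * (bInf μ (fun x => F (fun i => g i x))
              - bVar μ (fun x => F (fun i => g i x))) := by
  have hconv : (fun i => bexp μ (fun x => b2r (g i x))) = etaF μ g := rfl
  rw [hconv] at h2
  have hη := eta_valid μ g hμ hnc
  -- converted inner hypotheses
  have h1' : ∀ i, bEnt1 (muB μ i) (bG g i)
      ≤ C * (bInf (muB μ i) (bG g i) - (1 - etaF μ g i ^ 2)) := by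
    intro i
    have := h1 i
    rwa [ent_g μ g hμ hblock i, inf_g μ g hμ hblock i, var_g μ g hμ hblock i] at this
  -- variance identity
  have hvar : bVar μ (fun x => F (fun i => g i x)) = bVar (etaF μ g) F := by
    unfold bVar
    rw [Finset.sum_erase_eq_sub (Finset.mem_univ ∅), Finset.sum_erase_eq_sub (Finset.mem_univ ∅),
      var_f_full μ g hμ hblock hnc F, coeff_f_empty μ g hμ hblock hnc F]
  -- influence identity
  have hinf := inf_f μ g hμ hblock hnc F
  -- entropy identity
  have hent : bEnt1 μ (fun x => F (fun i => g i x))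
      = bEnt1 (etaF μ g) F
        + ∑ T : Finset (Fin k), (bcoeff (etaF μ g) F T) ^ 2
            * ∑ i ∈ T, bEnt1 (muB μ i) (bG g i) / (1 - etaF μ g i ^ 2) := by
    have lhs : bEnt1 μ (fun x => F (fun i => g i x))
        = (∑ S : Finset (Fin k × Fin l),
            (bcoeff μ (fun x => F (fun i => g i x)) S) ^ 2
              * Real.logb 2 ((∏ p ∈ S, (1 - μ p ^ 2))
                  / (bcoeff μ (fun x => F (fun i => g i x)) S) ^ 2))
          - (bcoeff μ (fun x => F (fun i => g i x)) ∅) ^ 2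
              * Real.logb 2 ((∏ p ∈ (∅ : Finset (Fin k × Fin l)), (1 - μ p ^ 2))
                  / (bcoeff μ (fun x => F (fun i => g i x)) ∅) ^ 2) := by
      rw [← Finset.sum_erase_eq_sub (Finset.mem_univ ∅)]; rfl
    have rhs : bEnt1 (etaF μ g) F
        = (∑ T : Finset (Fin k),
            (bcoeff (etaF μ g) F T) ^ 2
              * Real.logb 2 ((∏ i ∈ T, (1 - etaF μ g i ^ 2)) / (bcoeff (etaF μ g) F T) ^ 2))
          - (bcoeff (etaF μ g) F ∅) ^ 2
              * Real.logb 2 ((∏ i ∈ (∅ : Finset (Fin k)), (1 - etaF μ g i ^ 2))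
                  / (bcoeff (etaF μ g) F ∅) ^ 2) := by
      rw [← Finset.sum_erase_eq_sub (Finset.mem_univ ∅)]; rfl
    rw [lhs, rhs, ent_f_full μ g hμ hblock hnc F, coeff_f_empty μ g hμ hblock hnc F]
    rw [Finset.prod_empty, Finset.prod_empty]
    ring
  -- bInf of the outer function
  have hInfEta : bInf (etaF μ g) F
      = ∑ T : Finset (Fin k), (T.card : ℝ) * (bcoeff (etaF μ g) F T) ^ 2 := rfl
  -- per-T bound on the cross term
  have hper : ∀ T : Finset (Fin k),
      ∑ i ∈ T, C * (bInf (muB μ i) (bG g i) - (1 - etaF μ g i ^ 2)) / (1 - etaF μ g i ^ 2)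
        = C * (∑ i ∈ T, bInf (muB μ i) (bG g i) / (1 - etaF μ g i ^ 2))
            - C * (T.card : ℝ) := by
    intro T
    have e1 : ∀ i ∈ T, C * (bInf (muB μ i) (bG g i) - (1 - etaF μ g i ^ 2))
          / (1 - etaF μ g i ^ 2)
        = C * (bInf (muB μ i) (bG g i) / (1 - etaF μ g i ^ 2)) - C := by
      intro i _
      field_simp [ne_of_gt (sig_pos hη i)]
    rw [Finset.sum_congr rfl e1, Finset.sum_sub_distrib, Finset.sum_const, ← Finset.mul_sum]
    simp only [nsmul_eq_mul]
    ring
  have hcross : ∑ T : Finset (Fin k), (bcoeff (etaF μ g) F T) ^ 2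
        * ∑ i ∈ T, bEnt1 (muB μ i) (bG g i) / (1 - etaF μ g i ^ 2)
      ≤ ∑ T : Finset (Fin k), (bcoeff (etaF μ g) F T) ^ 2
          * (C * (∑ i ∈ T, bInf (muB μ i) (bG g i) / (1 - etaF μ g i ^ 2))
              - C * (T.card : ℝ)) := by
    refine Finset.sum_le_sum fun T _ => mul_le_mul_of_nonneg_left ?_ (sq_nonneg _)
    rw [← hper T]
    refine Finset.sum_le_sum fun i _ => ?_
    exact (div_le_div_iff_of_pos_right (sig_pos hη i)).mpr (h1' i)
  -- expand the RHS of hcross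
  have hsplit : ∑ T : Finset (Fin k), (bcoeff (etaF μ g) F T) ^ 2
        * (C * (∑ i ∈ T, bInf (muB μ i) (bG g i) / (1 - etaF μ g i ^ 2))
            - C * (T.card : ℝ))
      = C * bInf μ (fun x => F (fun i => g i x)) - C * bInf (etaF μ g) F := by
    rw [hinf, hInfEta, Finset.mul_sum, Finset.mul_sum, ← Finset.sum_sub_distrib]
    refine Finset.sum_congr rfl fun T _ => by ring
  have h2' := h2
  rw [mul_sub, ← hvar] at h2'
  rw [mul_sub]
  linarith [hcross, hent, hsplit, h2']
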